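/- arXiv:2102.07149 — 2 statements merged into one kernel-verified Lean document; each statement's English description precedes it below -/
import Mathlib

section
/- Let p ≥ 1 and k ≥ 2. Then for every i with 2 ≤ i ≤ 2n: (R^p·ω)(e_1, e_k, e_1, e_k, …, e_1, e_k, e_i, e_k) (with p leading pairs (e_1, e_k) followed by e_i, e_k) equals ε^p α^p ω(e_i, e_k). -/
noncomputable section

/-- Gauss-equation curvature `R(X,Y)Z = h(Y,Z)·S(X) − h(X,Z)·S(Y)`. -/
def RR {V : Type*} [AddCommGroup V] [Module ℝ V]
    (h : V →ₗ[ℝ] V →ₗ[ℝ] ℝ) (S : V →ₗ[ℝ] V) (X Y Z : V) : V :=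
  h Y Z • S X - h X Z • S Y

/-- One application of the curvature action on an `m`-linear form (encoded as a
function on lists of vectors): `(R·T)(X,Y,Z₁,…,Zₘ) = −∑ᵢ T(Z₁,…,R(X,Y)Zᵢ,…,Zₘ)`;
the two newest (leftmost) arguments are consumed. -/
def RAct {V : Type*} [AddCommGroup V] [Module ℝ V]
    (h : V →ₗ[ℝ] V →ₗ[ℝ] ℝ) (S : V →ₗ[ℝ] V) (T : List V → ℝ) : List V → ℝ
  | X :: Y :: Zs =>
      -∑ i ∈ Finset.range Zs.length, T (Zs.set i (RR h S X Y (Zs.getD i 0)))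
  | _ => 0

/-- `R^p · ω`, as a function on lists of vectors (of length `2p+2`):
`R⁰·ω = ω` and `R^p·ω = R·(R^{p−1}·ω)`. -/
def Rpow {V : Type*} [AddCommGroup V] [Module ℝ V]
    (h : V →ₗ[ℝ] V →ₗ[ℝ] ℝ) (S : V →ₗ[ℝ] V) (ω : V →ₗ[ℝ] V →ₗ[ℝ] ℝ) (p : ℕ) :
    List V → ℝ :=
  (RAct h S)^[p] (fun l => ω (l.getD 0 0) (l.getD 1 0))

/-- The list `X, Y, X, Y, …` with `p` pairs `(X, Y)`. -/
def pairList {V : Type*} (X Y : V) : ℕ → List V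
  | 0 => []
  | p + 1 => X :: Y :: pairList X Y p

/-- The list `f 1, y, f 2, y, …, f p, y`. -/
def interleave {V : Type*} (f : ℕ → V) (y : V) : ℕ → List V
  | 0 => []
  | p + 1 => interleave f y p ++ [f (p + 1), y]


/-!
Write `u = e_k` and `φ = h(u, ·)`. Since `h(u, u) = 0`, `S u = α u` and `φ ∘ S = α φ` on
`U = span(e_1, …, e_k)`, for `x ∈ U` the endomorphism `R(x, u)` maps `u` to `-α φ(x) u`, maps `U`
into `U`, and satisfies `φ (R(x, u) y) = α φ(x) φ(y)`. Induction on `q` then gives, for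
`x_1, …, x_q ∈ U` and `φ(z) = 0`,
  `(R^q·ω)(x_1, u, …, x_q, u, z, u) = α^q φ(x_1) ⋯ φ(x_q) ω(z, u)`:
in the inductive step the `q + 1` slots holding `u` contribute `-(q + 1) α φ(x)` times the inner
value, the `q` slots holding some `x_j` contribute `q α φ(x)` times it, and the slot of `z`
contributes nothing, because there `R(x, u) z` is a multiple of `u`. The theorem is the case
`x_j = e_1`, `z = e_i`, where `φ(e_1) = ε`.
-/

section Rpow

variable {V : Type*} [AddCommGroup V] [Module ℝ V]
  (h : V →ₗ[ℝ] V →ₗ[ℝ] ℝ) (S : V →ₗ[ℝ] V) (ω : V →ₗ[ℝ] V →ₗ[ℝ] ℝ)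

theorem RR_smul_left (c : ℝ) (X Y Z : V) : RR h S (c • X) Y Z = c • RR h S X Y Z := by
  simp only [RR, map_smul, LinearMap.smul_apply, smul_eq_mul, smul_sub, smul_comm c]
  module

theorem RR_smul_middle (c : ℝ) (X Y Z : V) : RR h S X (c • Y) Z = c • RR h S X Y Z := by
  simp only [RR, map_smul, LinearMap.smul_apply, smul_eq_mul]
  module

theorem RR_smul_right (c : ℝ) (X Y Z : V) : RR h S X Y (c • Z) = c • RR h S X Y Z := by
  simp only [RR, map_smul, smul_eq_mul]
  module

theorem Rpow_zero (l : List V) : Rpow h S ω 0 l = ω (l.getD 0 0) (l.getD 1 0) := rfl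

theorem Rpow_succ (q : ℕ) (X Y : V) (Zs : List V) :
    Rpow h S ω (q + 1) (X :: Y :: Zs) =
      -∑ j ∈ Finset.range Zs.length, Rpow h S ω q (Zs.set j (RR h S X Y (Zs.getD j 0))) := by
  rw [Rpow, Function.iterate_succ_apply']
  rfl

theorem Rpow_set_smul (q : ℕ) :
    ∀ L : List V, L.length = 2 * q + 2 → ∀ j < L.length, ∀ (c : ℝ) (v : V),
      Rpow h S ω q (L.set j (c • v)) = c * Rpow h S ω q (L.set j v) := by
  induction q with
  | zero =>
    rintro (_ | ⟨a, _ | ⟨b, _ | ⟨_, _⟩⟩⟩) hL j hj c v <;> simp at hL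
    simp only [List.length_cons, List.length_nil] at hj
    interval_cases j <;> simp [Rpow_zero]
  | succ q ih =>
    rintro (_ | ⟨X, _ | ⟨Y, Zs⟩⟩) hL j hj c v
    · simp at hL
    · simp at hL
    have hZs : Zs.length = 2 * q + 2 := by simp at hL; omega
    rcases j with _ | _ | j
    · simp only [List.set_cons_zero, Rpow_succ, RR_smul_left, mul_neg, Finset.mul_sum]
      congr 1
      exact Finset.sum_congr rfl fun t ht => ih Zs hZs t (by simpa using ht) c _
    · simp only [List.set_cons_succ, List.set_cons_zero, Rpow_succ, RR_smul_middle, mul_neg,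
        Finset.mul_sum]
      congr 1
      exact Finset.sum_congr rfl fun t ht => ih Zs hZs t (by simpa using ht) c _
    · simp only [List.set_cons_succ, Rpow_succ, List.length_set, mul_neg, Finset.mul_sum]
      congr 1
      refine Finset.sum_congr rfl fun t ht => ?_
      have ht : t < Zs.length := by simpa using ht
      rcases eq_or_ne j t with rfl | hjt
      · simp only [List.set_set, List.getD_eq_getElem?_getD, List.getElem?_set_self ht,
          Option.getD_some, RR_smul_right]
        exact ih Zs hZs j ht c _
      · simp only [List.getD_eq_getElem?_getD, List.getElem?_set_ne hjt, List.set_comm _ _ hjt]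
        exact ih _ (by simpa using hZs) j (by simp at hj ⊢; omega) c v

end Rpow

section withPartner

variable {α : Type*} (u : α)

def withPartner (ys : List α) : List α := ys.flatMap fun y => [y, u]

@[simp]
theorem withPartner_cons (y : α) (ys : List α) :
    withPartner u (y :: ys) = y :: u :: withPartner u ys := rfl

@[simp]
theorem length_withPartner (ys : List α) : (withPartner u ys).length = 2 * ys.length := by
  induction ys with
  | nil => rfl
  | cons y ys ih => simp [ih]; ring

theorem withPartner_getD_even (d : α) :
    ∀ (ys : List α) (t : ℕ), (withPartner u ys).getD (2 * t) d = ys.getD t d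
  | [], _ => rfl
  | _ :: _, 0 => rfl
  | _ :: ys, t + 1 => withPartner_getD_even d ys t

theorem withPartner_getD_odd (d : α) :
    ∀ (ys : List α) (t : ℕ), t < ys.length → (withPartner u ys).getD (2 * t + 1) d = u
  | _ :: _, 0, _ => rfl
  | _ :: ys, t + 1, ht => withPartner_getD_odd d ys t (by simpa using ht)

theorem withPartner_set_even (v : α) :
    ∀ (ys : List α) (t : ℕ), (withPartner u ys).set (2 * t) v = withPartner u (ys.set t v)
  | [], _ => rfl
  | _ :: _, 0 => rfl
  | y :: ys, t + 1 => by
    simp [Nat.mul_succ, withPartner_set_even v ys t]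

theorem withPartner_set_odd_self :
    ∀ (ys : List α) (t : ℕ), (withPartner u ys).set (2 * t + 1) u = withPartner u ys
  | [], _ => rfl
  | _ :: _, 0 => rfl
  | y :: ys, t + 1 => by
    simp [Nat.mul_succ, withPartner_set_odd_self ys t]

end withPartner

theorem Finset.sum_range_two_mul {M : Type*} [AddCommMonoid M] (f : ℕ → M) (m : ℕ) :
    ∑ j ∈ Finset.range (2 * m), f j = ∑ t ∈ Finset.range m, (f (2 * t) + f (2 * t + 1)) := by
  induction m with
  | zero => simp
  | succ m ih =>
    rw [Nat.mul_succ, Finset.sum_range_succ, Finset.sum_range_succ, Finset.sum_range_succ, ih,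
      add_assoc]

theorem List.prod_set_mul_getElem {M : Type*} [CommMonoid M] (l : List M) {t : ℕ}
    (ht : t < l.length) (c : M) : (l.set t (c * l[t])).prod = c * l.prod := by
  conv_rhs => rw [← List.set_getElem_self ht]
  rw [List.prod_set, List.prod_set, if_pos ht, if_pos (by simpa using ht)]
  ac_rfl

section Isotropic

variable {V : Type*} [AddCommGroup V] [Module ℝ V]

structure IsIsotropicEigen (h : V →ₗ[ℝ] V →ₗ[ℝ] ℝ) (S : V →ₗ[ℝ] V) (U : Submodule ℝ V)
    (u : V) (α : ℝ) : Prop where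
  mem : u ∈ U
  mapsTo : ∀ x ∈ U, S x ∈ U
  apply_self : S u = α • u
  isotropic : h u u = 0
  symm : ∀ x, h x u = h u x
  apply_map : ∀ x ∈ U, h u (S x) = α * h u x

namespace IsIsotropicEigen

variable {h : V →ₗ[ℝ] V →ₗ[ℝ] ℝ} {S : V →ₗ[ℝ] V} {U : Submodule ℝ V} {u : V} {α : ℝ}

theorem RR_self (H : IsIsotropicEigen h S U u α) (x : V) :
    RR h S x u u = (-(α * h u x)) • u := by
  rw [RR, H.isotropic, H.symm, H.apply_self, zero_smul, zero_sub, smul_smul, neg_smul, mul_comm]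

theorem RR_mem (H : IsIsotropicEigen h S U u α) {x : V} (hx : x ∈ U) (y : V) :
    RR h S x u y ∈ U :=
  U.sub_mem (U.smul_mem _ (H.mapsTo x hx)) (U.smul_mem _ (H.mapsTo u H.mem))

theorem apply_RR (H : IsIsotropicEigen h S U u α) (x y : V) :
    h u (RR h S x u y) = h u y * h u (S x) := by
  simp [RR, H.apply_self, H.isotropic]

theorem Rpow_withPartner (H : IsIsotropicEigen h S U u α) (ω : V →ₗ[ℝ] V →ₗ[ℝ] ℝ)
    (hω : ω u u = 0) (q : ℕ) :
    ∀ xs : List V, xs.length = q → (∀ x ∈ xs, x ∈ U) → ∀ z, h u z = 0 →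
      Rpow h S ω q (withPartner u (xs ++ [z])) = α ^ q * (xs.map (h u)).prod * ω z u := by
  induction q with
  | zero =>
    rintro xs hxs - z -
    obtain rfl := List.length_eq_zero_iff.mp hxs
    simp [Rpow_zero]
  | succ q ih =>
    rintro (_ | ⟨x, xs⟩) hxs hU z hz
    · simp at hxs
    simp only [List.length_cons, add_left_inj] at hxs
    have hx : x ∈ U := hU x (by simp)
    have hxsU : ∀ y ∈ xs, y ∈ U := fun y hy => hU y (by simp [hy])
    set L := withPartner u (xs ++ [z])
    set F := α ^ q * (xs.map (h u)).prod * ω z u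
    have hLlen : L.length = 2 * (q + 1) := by simp [L, hxs]
    have hodd : ∀ t < q + 1,
        Rpow h S ω q (L.set (2 * t + 1) (RR h S x u (L.getD (2 * t + 1) 0))) =
          -(α * h u x) * F := by
      intro t ht
      rw [withPartner_getD_odd _ _ _ _ (by simpa [hxs] using ht), H.RR_self,
        Rpow_set_smul h S ω q L (by omega) _ (by omega), withPartner_set_odd_self,
        ih xs hxs hxsU z hz]
    have heven : ∀ t < q,
        Rpow h S ω q (L.set (2 * t) (RR h S x u (L.getD (2 * t) 0))) = α * h u x * F := by
      intro t ht
      have ht' : t < xs.length := hxs ▸ ht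
      have hmem : ∀ y ∈ xs.set t (RR h S x u xs[t]), y ∈ U := by
        intro y hy
        rcases List.mem_or_eq_of_mem_set hy with hy | rfl
        · exact hxsU y hy
        · exact H.RR_mem hx _
      have hφ : h u (RR h S x u xs[t]) = α * h u x * (xs.map (h u))[t]'(by simpa using ht') := by
        rw [H.apply_RR, H.apply_map x hx, List.getElem_map]
        ring
      rw [withPartner_getD_even, withPartner_set_even, List.getD_append _ _ _ _ ht',
        List.set_append, if_pos ht', List.getD_eq_getElem _ _ ht',
        ih _ (by simp [hxs]) hmem z hz, List.map_set, hφ, List.prod_set_mul_getElem]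
      ring
    have hlast : Rpow h S ω q (L.set (2 * q) (RR h S x u (L.getD (2 * q) 0))) = 0 := by
      have hz' : h u (RR h S x u z) = 0 := by rw [H.apply_RR, hz, zero_mul]
      have hget : (xs ++ [z]).getD q 0 = z := by simp [← hxs]
      have hset : (xs ++ [z]).set q (RR h S x u z) = xs ++ [RR h S x u z] := by simp [← hxs]
      rw [withPartner_getD_even, withPartner_set_even, hget, hset, ih xs hxs hxsU _ hz']
      simp [RR, hz, H.apply_self, hω]
    rw [List.cons_append, withPartner_cons, Rpow_succ, hLlen, Finset.sum_range_two_mul,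
      Finset.sum_add_distrib, Finset.sum_range_succ, Finset.sum_congr rfl fun t ht =>
        heven t (Finset.mem_range.mp ht), Finset.sum_congr rfl fun t ht =>
        hodd t (Finset.mem_range.mp ht), hlast]
    simp only [Finset.sum_const, Finset.card_range, nsmul_eq_mul, List.map_cons, List.prod_cons, F]
    push_cast
    ring

end IsIsotropicEigen

end Isotropic

theorem isIsotropicEigen_span_jordanChain {V : Type*} [AddCommGroup V] [Module ℝ V]
    {h : V →ₗ[ℝ] V →ₗ[ℝ] ℝ} {S : V →ₗ[ℝ] V} {e : ℕ → V} {k : ℕ} {α : ℝ} (hk : 2 ≤ k)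
    (hS1 : ∀ i, 1 ≤ i → i ≤ k - 1 → S (e i) = α • e i + e (i + 1))
    (hS2 : S (e k) = α • e k)
    (hsymm : ∀ x, h x (e k) = h (e k) x)
    (hker : ∀ j, 2 ≤ j → j ≤ k → h (e k) (e j) = 0) :
    IsIsotropicEigen h S (Submodule.span ℝ (e '' Set.Icc 1 k)) (e k) α := by
  set U := Submodule.span ℝ (e '' Set.Icc 1 k)
  have he : ∀ m, 1 ≤ m → m ≤ k → e m ∈ U := fun m h1 h2 =>
    Submodule.subset_span ⟨m, ⟨h1, h2⟩, rfl⟩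
  have hmaps : U ≤ U.comap S := by
    refine Submodule.span_le.mpr ?_
    rintro _ ⟨m, ⟨hm1, hmk⟩, rfl⟩
    rcases hmk.lt_or_eq with hmk | rfl
    · rw [SetLike.mem_coe, Submodule.mem_comap, hS1 m hm1 (by omega)]
      exact U.add_mem (U.smul_mem _ (he m hm1 hmk.le)) (he (m + 1) (by omega) hmk)
    · rw [SetLike.mem_coe, Submodule.mem_comap, hS2]
      exact U.smul_mem _ (he m hm1 le_rfl)
  have hadj : U ≤ LinearMap.ker (h (e k) ∘ₗ S - α • h (e k)) := by
    refine Submodule.span_le.mpr ?_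
    rintro _ ⟨m, ⟨hm1, hmk⟩, rfl⟩
    rw [SetLike.mem_coe, LinearMap.mem_ker, LinearMap.sub_apply, sub_eq_zero]
    rcases hmk.lt_or_eq with hmk | rfl
    · simp [hS1 m hm1 (by omega), hker (m + 1) (by omega) hmk]
    · simp [hS2]
  exact {
    mem := he k (by omega) le_rfl
    mapsTo := fun x hx => hmaps hx
    apply_self := hS2
    isotropic := hker k hk le_rfl
    symm := hsymm
    apply_map := fun x hx => by
      simpa [sub_eq_zero] using hadj hx }

theorem pairList_append_eq_withPartner {V : Type*} (X Y Z : V) (p : ℕ) :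
    pairList X Y p ++ [Z, Y] = withPartner Y (List.replicate p X ++ [Z]) := by
  induction p with
  | zero => rfl
  | succ p ih => simp [pairList, List.replicate_succ, ih]

theorem stmt6_general
    {V : Type*} [AddCommGroup V] [Module ℝ V]
    (n : ℕ) (e : ℕ → V)
    (h ω : V →ₗ[ℝ] V →ₗ[ℝ] ℝ)
    (hsymm : ∀ X Y, h X Y = h Y X)
    (halt : ∀ X, ω X X = 0)
    (S : V →ₗ[ℝ] V)
    (k : ℕ) (hk2 : 2 ≤ k) (hk : k ≤ 2 * n)
    (α ε : ℝ)
    (hS1 : ∀ i, 1 ≤ i → i ≤ k - 1 → S (e i) = α • e i + e (i + 1))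
    (hS2 : S (e k) = α • e k)
    (hh1 : ∀ i j, 1 ≤ i → i ≤ k → 1 ≤ j → j ≤ k → i + j = k + 1 → h (e i) (e j) = ε)
    (hh0 : ∀ i j, 1 ≤ i → i ≤ 2 * n → 1 ≤ j → j ≤ 2 * n → min i j ≤ k →
      ¬(i ≤ k ∧ j ≤ k ∧ i + j = k + 1) → h (e i) (e j) = 0)
    (p : ℕ)
    (i : ℕ) (hi2 : 2 ≤ i) (hi : i ≤ 2 * n) :
    Rpow h S ω p (pairList (e 1) (e k) p ++ [e i, e k]) =
      ε ^ p * α ^ p * ω (e i) (e k) := by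
  have hker : ∀ j, 2 ≤ j → j ≤ 2 * n → h (e k) (e j) = 0 := fun j hj2 hj =>
    hh0 k j (by omega) hk (by omega) hj (by omega) (by omega)
  have H := isIsotropicEigen_span_jordanChain hk2 hS1 hS2 (fun x => hsymm x _)
    fun j hj2 hjk => hker j hj2 (by omega)
  have he1 : e 1 ∈ Submodule.span ℝ (e '' Set.Icc 1 k) :=
    Submodule.subset_span ⟨1, ⟨le_rfl, by omega⟩, rfl⟩
  rw [pairList_append_eq_withPartner, H.Rpow_withPartner ω (halt _) p _ List.length_replicate
      (fun x hx => List.eq_of_mem_replicate hx ▸ he1) (e i) (hker i hi2 hi),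
    List.map_replicate, List.prod_replicate, hh1 k 1 (by omega) le_rfl le_rfl (by omega) (by omega)]
  ring

theorem stmt6
    {V : Type*} [AddCommGroup V] [Module ℝ V]
    (n : ℕ) (hn : 2 ≤ n) (e : ℕ → V)
    (hbasis : ∃ b : Module.Basis (Fin (2 * n)) ℝ V, ∀ i : Fin (2 * n), b i = e (i.1 + 1))
    (h ω : V →ₗ[ℝ] V →ₗ[ℝ] ℝ)
    (hsymm : ∀ X Y, h X Y = h Y X)
    (halt : ∀ X, ω X X = 0)
    (S : V →ₗ[ℝ] V)
    (k : ℕ) (hk2 : 2 ≤ k) (hk : k ≤ 2 * n)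
    (α ε : ℝ) (hε : ε = 1 ∨ ε = -1)
    (hS1 : ∀ i, 1 ≤ i → i ≤ k - 1 → S (e i) = α • e i + e (i + 1))
    (hS2 : S (e k) = α • e k)
    (hh1 : ∀ i j, 1 ≤ i → i ≤ k → 1 ≤ j → j ≤ k → i + j = k + 1 → h (e i) (e j) = ε)
    (hh0 : ∀ i j, 1 ≤ i → i ≤ 2 * n → 1 ≤ j → j ≤ 2 * n → min i j ≤ k →
      ¬(i ≤ k ∧ j ≤ k ∧ i + j = k + 1) → h (e i) (e j) = 0)
    (p : ℕ) (hp : 1 ≤ p)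
    (i : ℕ) (hi2 : 2 ≤ i) (hi : i ≤ 2 * n) :
    Rpow h S ω p (pairList (e 1) (e k) p ++ [e i, e k]) =
      ε ^ p * α ^ p * ω (e i) (e k) :=
  stmt6_general n e h ω hsymm halt S k hk2 hk α ε hS1 hS2 hh1 hh0 p i hi2 hi
end
end

section
/- Let k > 3 and p ≥ 0. Then: (1) (R^{2p+1}·ω)(e_1, e_{k−1}, …, e_1, e_{k−1}, e_2, e_k) with 2p+1 leading pairs (e_1, e_{k−1}) equals −ε α (ω(e_1, e_k) − ω(e_2, e_{k−1})); (2) (R^{2p+2}·ω)(e_1, e_{k−1}, …, e_1, e_{k−1}, e_2, e_k) with 2p+2 leading pairs (e_1, e_{k−1}) equals −α (2α ω(e_1, e_{k−1}) + ω(e_2, e_{k−1}) + ω(e_1, e_k)). -/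
noncomputable section

/-!
Put `a = e₁`, `b = e_{k-1}` and `D = R(a, b)`. Since `h` vanishes on `span {a, b}`, `D` kills `a`
and `b`, so in `(R^q·ω)(a, b, …, a, b, u, v)` every term in which `D` hits one of the leading
slots vanishes, and what remains is the `q`-fold action `B ↦ -(B(D·, ·) + B(·, D·))` of `D` on `ω`,
evaluated at `(u, v)`. On the Jordan block, `x = α e₁ + e₂` and `y = α e_{k-1} + e_k` are
eigenvectors of `D` with eigenvalues `ε` and `-ε`, and `e₂ = x - α a`, `e_k = y - α b`; the
iterated action on pairs of eigenvectors is explicit, and `ε² = 1` gives the two parities.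
-/

section BilinearAction

variable {R M : Type*} [CommRing R] [AddCommGroup M] [Module R M]

/-- `R·T` for `m = 2`, with the endomorphism `R(X, Y)` fixed to `D`. -/
def actBilin (D : M →ₗ[R] M) (B : M →ₗ[R] M →ₗ[R] R) : M →ₗ[R] M →ₗ[R] R :=
  -(B ∘ₗ D + B.compl₂ D)

variable (D : M →ₗ[R] M) (B : M →ₗ[R] M →ₗ[R] R)

@[simp]
lemma actBilin_apply (u v : M) : actBilin D B u v = -(B (D u) v + B u (D v)) := rfl

lemma actBilin_iterate_succ_apply (q : ℕ) (u v : M) :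
    (actBilin D)^[q + 1] B u v =
      -((actBilin D)^[q] B (D u) v + (actBilin D)^[q] B u (D v)) := by
  rw [Function.iterate_succ_apply', actBilin_apply]

lemma actBilin_iterate_apply_of_eigen {u v : M} {l m : R} (hu : D u = l • u) (hv : D v = m • v)
    (q : ℕ) : (actBilin D)^[q] B u v = (-(l + m)) ^ q * B u v := by
  induction q with
  | zero => simp
  | succ q ih =>
    rw [actBilin_iterate_succ_apply, hu, hv, map_smul, map_smul, LinearMap.smul_apply, ih]
    simp only [smul_eq_mul]
    ring

lemma actBilin_iterate_succ_apply_sub_smul {a b x y : M} {t : R} (ha : D a = 0) (hb : D b = 0)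
    (hx : D x = t • x) (hy : D y = -t • y) (c : R) (q : ℕ) :
    (actBilin D)^[q + 1] B (x - c • a) (y - c • b) =
      -(t * c) * (t ^ q * B a y - (-t) ^ q * B x b) := by
  have hay := actBilin_iterate_apply_of_eigen D B (ha.trans (zero_smul R a).symm) hy q
  have hxb := actBilin_iterate_apply_of_eigen D B hx (hb.trans (zero_smul R b).symm) q
  -- the two `B (x, y)` terms cancel since the eigenvalues `t` and `-t` are opposite
  rw [actBilin_iterate_succ_apply]
  simp only [map_sub, map_smul, ha, hb, hx, hy, smul_zero, sub_zero, LinearMap.sub_apply,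
    LinearMap.smul_apply, smul_eq_mul, hay, hxb]
  ring

end BilinearAction

section PairList

variable {α : Type*}

lemma length_pairList (a b : α) (q : ℕ) : (pairList a b q).length = 2 * q := by
  induction q with
  | zero => rfl
  | succ q ih => simp [pairList, ih]; ring

lemma eq_or_eq_of_mem_pairList {a b z : α} {q : ℕ} (hz : z ∈ pairList a b q) : z = a ∨ z = b := by
  induction q with
  | zero => simp [pairList] at hz
  | succ q ih =>
    simp only [pairList, List.mem_cons] at hz
    tauto

end PairList

section CurvatureAction

variable {V : Type*} [AddCommGroup V] [Module ℝ V]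
  (h : V →ₗ[ℝ] V →ₗ[ℝ] ℝ) (S : V →ₗ[ℝ] V) (ω : V →ₗ[ℝ] V →ₗ[ℝ] ℝ)

def curvOp (X Y : V) : V →ₗ[ℝ] V :=
  (h Y).smulRight (S X) - (h X).smulRight (S Y)

@[simp]
lemma curvOp_apply (X Y Z : V) : curvOp h S X Y Z = RR h S X Y Z := rfl

lemma RR_zero_left (Y Z : V) : RR h S 0 Y Z = 0 := by simp [RR]

lemma RR_zero_middle (X Z : V) : RR h S X 0 Z = 0 := by simp [RR]

lemma RR_zero_right (X Y : V) : RR h S X Y 0 = 0 := by simp [RR]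

lemma Rpow_succ_s8 (q : ℕ) : Rpow h S ω (q + 1) = RAct h S (Rpow h S ω q) :=
  Function.iterate_succ_apply' _ _ _

lemma RAct_eq_zero_of_zero_mem {T : List V → ℝ} {m : ℕ}
    (hT : ∀ L : List V, L.length = m → 0 ∈ L → T L = 0) (L : List V) (hL : L.length = m + 2)
    (h0 : 0 ∈ L) : RAct h S T L = 0 := by
  obtain _ | ⟨X, _ | ⟨Y, Zs⟩⟩ := L
  · simp at hL
  · simp at hL
  rw [RAct, neg_eq_zero]
  refine Finset.sum_eq_zero fun i hi => hT _ (by simpa using hL) ?_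
  rw [Finset.mem_range] at hi
  rw [List.getD_eq_getElem _ _ hi]
  by_cases hw : RR h S X Y Zs[i] = 0
  · exact hw ▸ List.mem_set hi 0
  have hZs : 0 ∈ Zs := by
    rcases List.mem_cons.1 h0 with rfl | h0
    · exact absurd (RR_zero_left h S _ _) hw
    rcases List.mem_cons.1 h0 with rfl | h0
    · exact absurd (RR_zero_middle h S _ _) hw
    exact h0
  obtain ⟨j, hj, hj0⟩ := List.mem_iff_getElem.1 hZs
  have hij : i ≠ j := by rintro rfl; exact hw (hj0 ▸ RR_zero_right h S X Y)
  exact List.mem_iff_getElem.2 ⟨j, by simpa using hj, by rw [List.getElem_set_ne hij, hj0]⟩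

lemma Rpow_eq_zero_of_zero_mem (q : ℕ) (L : List V) (hL : L.length = 2 * q + 2)
    (h0 : 0 ∈ L) : Rpow h S ω q L = 0 := by
  induction q generalizing L with
  | zero =>
    obtain ⟨x, y, rfl⟩ : ∃ x y : V, L = [x, y] := List.length_eq_two.1 hL
    rcases (by simpa [eq_comm] using h0 : x = 0 ∨ y = 0) with rfl | rfl <;> simp [Rpow]
  | succ q ih =>
    rw [Rpow_succ_s8]
    exact RAct_eq_zero_of_zero_mem h S ih L (by rw [hL]; ring) h0

lemma RAct_cons_cons_append_pair {T : List V → ℝ} (X Y : V) (P : List V)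
    (hT : ∀ L : List V, L.length = P.length + 2 → 0 ∈ L → T L = 0)
    (hP : ∀ z ∈ P, RR h S X Y z = 0) (u v : V) :
    RAct h S T (X :: Y :: (P ++ [u, v])) =
      -(T (P ++ [RR h S X Y u, v]) + T (P ++ [u, RR h S X Y v])) := by
  rw [RAct, List.length_append, List.length_cons, List.length_singleton, ← add_assoc,
    Finset.sum_range_succ, Finset.sum_range_succ, Finset.sum_eq_zero, zero_add]
  · simp [List.set_append_right]
  intro i hi
  rw [Finset.mem_range] at hi
  rw [List.getD_append _ _ _ _ hi, List.getD_eq_getElem _ _ hi, hP _ (List.getElem_mem hi),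
    List.set_append_left _ _ hi]
  exact hT _ (by simp) (List.mem_append_left _ (List.mem_set hi 0))

lemma Rpow_pairList_append {a b : V} (ha : RR h S a b a = 0) (hb : RR h S a b b = 0) (q : ℕ)
    (u v : V) :
    Rpow h S ω q (pairList a b q ++ [u, v]) = (actBilin (curvOp h S a b))^[q] ω u v := by
  induction q generalizing u v with
  | zero => rfl
  | succ q ih =>
    have hP : ∀ z ∈ pairList a b q, RR h S a b z = 0 := fun z hz => by
      rcases eq_or_eq_of_mem_pairList hz with rfl | rfl <;> assumption
    rw [Rpow_succ_s8, pairList, List.cons_append, List.cons_append,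
      RAct_cons_cons_append_pair h S a b _ ?_ hP, ih, ih, actBilin_iterate_succ_apply]
    · rfl
    · intro L hL h0
      exact Rpow_eq_zero_of_zero_mem h S ω q L (by rw [hL, length_pairList]) h0

end CurvatureAction

theorem stmt8_general
    {V : Type*} [AddCommGroup V] [Module ℝ V]
    (n : ℕ) (e : ℕ → V)
    (h ω : V →ₗ[ℝ] V →ₗ[ℝ] ℝ)
    (S : V →ₗ[ℝ] V)
    (k : ℕ) (hk : k ≤ 2 * n)
    (α ε : ℝ) (hε : ε = 1 ∨ ε = -1)
    (hS1 : ∀ i, 1 ≤ i → i ≤ k - 1 → S (e i) = α • e i + e (i + 1))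
    (hh1 : ∀ i j, 1 ≤ i → i ≤ k → 1 ≤ j → j ≤ k → i + j = k + 1 → h (e i) (e j) = ε)
    (hh0 : ∀ i j, 1 ≤ i → i ≤ 2 * n → 1 ≤ j → j ≤ 2 * n → min i j ≤ k →
      ¬(i ≤ k ∧ j ≤ k ∧ i + j = k + 1) → h (e i) (e j) = 0)
    (hk3 : 3 < k)
    (p : ℕ) :
    Rpow h S ω (2 * p + 1) (pairList (e 1) (e (k - 1)) (2 * p + 1) ++ [e 2, e k]) =
      -(ε * α) * (ω (e 1) (e k) - ω (e 2) (e (k - 1))) ∧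
    Rpow h S ω (2 * p + 2) (pairList (e 1) (e (k - 1)) (2 * p + 2) ++ [e 2, e k]) =
      -α * (2 * α * ω (e 1) (e (k - 1)) + ω (e 2) (e (k - 1)) + ω (e 1) (e k)) := by
  have hzero : ∀ i j, 1 ≤ i ∧ i ≤ k ∧ 1 ≤ j ∧ j ≤ k ∧ i + j ≠ k + 1 → h (e i) (e j) = 0 :=
    fun i j hij => hh0 i j (by omega) (by omega) (by omega) (by omega) (by omega) (by omega)
  have h1ek : h (e 1) (e k) = ε := hh1 1 k le_rfl (by omega) (by omega) le_rfl (by omega)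
  have h2e2 : h (e (k - 1)) (e 2) = ε :=
    hh1 (k - 1) 2 (by omega) (by omega) (by omega) (by omega) (by omega)
  have hSe1 : S (e 1) = α • e 1 + e 2 := hS1 1 le_rfl (by omega)
  have hSek1 : S (e (k - 1)) = α • e (k - 1) + e k := by
    rw [hS1 (k - 1) (by omega) le_rfl, Nat.sub_add_cancel (by omega)]
  set D := curvOp h S (e 1) (e (k - 1))
  have hDa : D (e 1) = 0 := by simp [D, RR, hzero 1 1 (by omega), hzero (k - 1) 1 (by omega)]
  have hDb : D (e (k - 1)) = 0 := by
    simp [D, RR, hzero 1 (k - 1) (by omega), hzero (k - 1) (k - 1) (by omega)]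
  have hDx : D (α • e 1 + e 2) = ε • (α • e 1 + e 2) := by
    rw [map_add, map_smul, hDa, smul_zero, zero_add]
    simp [D, RR, hzero 1 2 (by omega), h2e2, hSe1]
  have hDy : D (α • e (k - 1) + e k) = -ε • (α • e (k - 1) + e k) := by
    rw [map_add, map_smul, hDb, smul_zero, zero_add]
    simp [D, RR, hzero (k - 1) k (by omega), h1ek, hSek1]
    abel
  have hεsq : ε ^ 2 = 1 := by rcases hε with rfl | rfl <;> norm_num
  have hεeven : ε ^ (2 * p) = 1 := by rw [pow_mul, hεsq, one_pow]
  have hnegεeven : (-ε) ^ (2 * p) = 1 := by rw [pow_mul, neg_sq, hεsq, one_pow]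
  have hiter (q : ℕ) := actBilin_iterate_succ_apply_sub_smul D ω hDa hDb hDx hDy α q
  simp only [add_sub_cancel_left] at hiter
  rw [Rpow_pairList_append h S ω hDa hDb, Rpow_pairList_append h S ω hDa hDb, hiter, hiter,
    pow_succ, pow_succ, hεeven, hnegεeven]
  simp only [map_add, map_smul, LinearMap.add_apply, LinearMap.smul_apply, smul_eq_mul]
  constructor
  · ring
  · linear_combination
      (-α * (2 * α * ω (e 1) (e (k - 1)) + ω (e 2) (e (k - 1)) + ω (e 1) (e k))) * hεsq

theorem stmt8
    {V : Type*} [AddCommGroup V] [Module ℝ V]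
    (n : ℕ) (hn : 2 ≤ n) (e : ℕ → V)
    (hbasis : ∃ b : Module.Basis (Fin (2 * n)) ℝ V, ∀ i : Fin (2 * n), b i = e (i.1 + 1))
    (h ω : V →ₗ[ℝ] V →ₗ[ℝ] ℝ)
    (hsymm : ∀ X Y, h X Y = h Y X)
    (halt : ∀ X, ω X X = 0)
    (S : V →ₗ[ℝ] V)
    (k : ℕ) (hk2 : 2 ≤ k) (hk : k ≤ 2 * n)
    (α ε : ℝ) (hε : ε = 1 ∨ ε = -1)
    (hS1 : ∀ i, 1 ≤ i → i ≤ k - 1 → S (e i) = α • e i + e (i + 1))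
    (hS2 : S (e k) = α • e k)
    (hh1 : ∀ i j, 1 ≤ i → i ≤ k → 1 ≤ j → j ≤ k → i + j = k + 1 → h (e i) (e j) = ε)
    (hh0 : ∀ i j, 1 ≤ i → i ≤ 2 * n → 1 ≤ j → j ≤ 2 * n → min i j ≤ k →
      ¬(i ≤ k ∧ j ≤ k ∧ i + j = k + 1) → h (e i) (e j) = 0)
    (hk3 : 3 < k)
    (p : ℕ) :
    Rpow h S ω (2 * p + 1) (pairList (e 1) (e (k - 1)) (2 * p + 1) ++ [e 2, e k]) =
      -(ε * α) * (ω (e 1) (e k) - ω (e 2) (e (k - 1))) ∧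
    Rpow h S ω (2 * p + 2) (pairList (e 1) (e (k - 1)) (2 * p + 2) ++ [e 2, e k]) =
      -α * (2 * α * ω (e 1) (e (k - 1)) + ω (e 2) (e (k - 1)) + ω (e 1) (e k)) :=
  stmt8_general n e h ω S k hk α ε hε hS1 hh1 hh0 hk3 p
end
end
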